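/- The operators S⁺ = ∑ b^α (∂/∂a_β) V_{αβ} and S⁻ = ∑ a_α (∂/∂b^β) V^{αβ} commute with the operators T⁺ = ∑_γ a_γ b^γ and T⁻ = (1/4)∑_γ ∂²/∂a_γ∂b^γ: [S^±, T^±] = [S^±, T^∓] = 0, so the two sl(2) algebras generated by (S^±, S⁰) and (T^±, T⁰) mutually commute. -/

import Mathlib

/-!
Every term of `S^±` has the form `V_{αβ} x_α ∂/∂y_β`, where `y_β` is the partner of `x_β` in
`T⁺ = ∑ a_γ b^γ`. Commuting with `T⁺` turns `∂/∂y_β` into multiplication by `x_β`, and commuting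
`T⁻` past it turns `x_α` into `(1/4) ∂/∂y_α`. Either way `V_{αβ}` is contracted against an
expression symmetric in `α, β`, which vanishes because `V` is antisymmetric.
-/

open MvPolynomial

noncomputable section

abbrev P8 : Type := MvPolynomial (Fin 4 ⊕ Fin 4) ℝ

def mulX (v : Fin 4 ⊕ Fin 4) : Module.End ℝ P8 := LinearMap.mulLeft ℝ (X v)

def dd (v : Fin 4 ⊕ Fin 4) : Module.End ℝ P8 := (pderiv v).toLinearMap

def Na : Module.End ℝ P8 := ∑ α : Fin 4, mulX (Sum.inl α) * dd (Sum.inl α)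

def Nb : Module.End ℝ P8 := ∑ α : Fin 4, mulX (Sum.inr α) * dd (Sum.inr α)

/-- `S⁻ = ∑_{α,β} a_α (∂/∂b^β) V^{αβ}` for an antisymmetric matrix `Vup = V^{··}`. -/
def Sminus (Vup : Matrix (Fin 4) (Fin 4) ℝ) : Module.End ℝ P8 :=
  ∑ α : Fin 4, ∑ β : Fin 4, Vup α β • (mulX (Sum.inl α) * dd (Sum.inr β))

/-- `S⁺ = ∑_{α,β} b^α (∂/∂a_β) V_{αβ}` for an antisymmetric matrix `Vdn = V_{··}`. -/
def Splus (Vdn : Matrix (Fin 4) (Fin 4) ℝ) : Module.End ℝ P8 :=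
  ∑ α : Fin 4, ∑ β : Fin 4, Vdn α β • (mulX (Sum.inr α) * dd (Sum.inl β))

/-- `T⁺ = ∑_γ a_γ b^γ`. -/
def Tplus : Module.End ℝ P8 := ∑ γ : Fin 4, mulX (Sum.inl γ) * mulX (Sum.inr γ)

/-- `T⁻ = (1/4)∑_γ ∂²/∂a_γ∂b^γ`. -/
def Tminus : Module.End ℝ P8 := (1/4 : ℝ) • ∑ γ : Fin 4, dd (Sum.inl γ) * dd (Sum.inr γ)

namespace Ring

variable {A : Type*} [Ring A]

theorem lie_mul (a b c : A) : ⁅a, b * c⁆ = ⁅a, b⁆ * c + b * ⁅a, c⁆ := by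
  simp only [lie_def]; noncomm_ring

theorem mul_lie (a b c : A) : ⁅a * b, c⁆ = a * ⁅b, c⁆ + ⁅a, c⁆ * b := by
  simp only [lie_def]; noncomm_ring

theorem lie_sum {ι : Type*} (s : Finset ι) (a : A) (f : ι → A) :
    ⁅a, ∑ i ∈ s, f i⁆ = ∑ i ∈ s, ⁅a, f i⁆ := by
  simp only [lie_def, Finset.mul_sum, Finset.sum_mul, Finset.sum_sub_distrib]

theorem sum_lie {ι : Type*} (s : Finset ι) (f : ι → A) (a : A) :
    ⁅∑ i ∈ s, f i, a⁆ = ∑ i ∈ s, ⁅f i, a⁆ := by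
  simp only [lie_def, Finset.mul_sum, Finset.sum_mul, Finset.sum_sub_distrib]

variable {R : Type*} [Monoid R] [DistribMulAction R A] [SMulCommClass R A A] [IsScalarTower R A A]

theorem lie_smul (t : R) (a b : A) : ⁅a, t • b⁆ = t • ⁅a, b⁆ := by
  simp only [lie_def, mul_smul_comm, smul_mul_assoc, smul_sub]

theorem smul_lie (t : R) (a b : A) : ⁅t • a, b⁆ = t • ⁅a, b⁆ := by
  simp only [lie_def, mul_smul_comm, smul_mul_assoc, smul_sub]

end Ring

theorem sum_sum_smul_eq_zero_of_antisymm {ι R M : Type*} [Fintype ι] [DivisionRing R]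
    [CharZero R] [AddCommGroup M] [Module R M] (V : Matrix ι ι R) (hV : ∀ i j, V i j = -V j i)
    (f : ι → ι → M) (hf : ∀ i j, f i j = f j i) : ∑ i, ∑ j, V i j • f i j = 0 := by
  set S := ∑ i, ∑ j, V i j • f i j
  have hS : S = -S := calc
    S = ∑ j, ∑ i, -(V j i • f j i) := by
      rw [Finset.sum_comm]
      exact Finset.sum_congr rfl fun j _ => Finset.sum_congr rfl fun i _ => by
        rw [hV, hf, neg_smul]
    _ = -S := by simp only [S, Finset.sum_neg_distrib]
  have h2S : (2 : R) • S = 0 := by rw [two_smul, ← neg_add_cancel S, ← hS]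
  exact (smul_eq_zero.mp h2S).resolve_left two_ne_zero

theorem Derivation.lie_coe_mulLeft {R A : Type*} [CommRing R] [CommRing A] [Algebra R A]
    (D : Derivation R A A) (a : A) :
    ⁅(D : Module.End R A), LinearMap.mulLeft R a⁆ = LinearMap.mulLeft R (D a) := by
  ext p
  simp [Ring.lie_def, D.leibniz, mul_comm]

theorem MvPolynomial.lie_pderiv_pderiv {σ R : Type*} [CommRing R] (i j : σ) :
    ⁅(pderiv i : Derivation R (MvPolynomial σ R) (MvPolynomial σ R)),
      (pderiv j : Derivation R (MvPolynomial σ R) (MvPolynomial σ R))⁆ = 0 :=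
  derivation_ext fun k => by
    classical simp [Derivation.commutator_apply, pderiv_X, Pi.single_apply, apply_ite]

theorem mulX_commute (v w : Fin 4 ⊕ Fin 4) : Commute (mulX v) (mulX w) := by
  simp only [Commute, SemiconjBy, mulX, Module.End.mul_eq_comp, ← LinearMap.mulLeft_mul, mul_comm]

theorem dd_commute (v w : Fin 4 ⊕ Fin 4) : Commute (dd v) (dd w) := by
  rw [commute_iff_lie_eq, dd, dd, ← Derivation.commutator_coe_linear_map,
    MvPolynomial.lie_pderiv_pderiv, Derivation.coe_zero_linearMap]

theorem lie_dd_mulX (v w : Fin 4 ⊕ Fin 4) : ⁅dd v, mulX w⁆ = if w = v then 1 else 0 := by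
  rw [dd, mulX, Derivation.lie_coe_mulLeft]
  split_ifs with h
  · rw [h, pderiv_X_self, LinearMap.mulLeft_one, Module.End.one_eq_id]
  · rw [pderiv_X_of_ne h, LinearMap.mulLeft_zero_eq_zero]

theorem lie_dd_Tplus (v : Fin 4 ⊕ Fin 4) : ⁅dd v, Tplus⁆ = mulX v.swap := by
  rw [Tplus, Ring.lie_sum]
  simp only [Ring.lie_mul, lie_dd_mulX]
  cases v <;> simp

theorem lie_Tminus_mulX (u : Fin 4 ⊕ Fin 4) : ⁅Tminus, mulX u⁆ = (1/4 : ℝ) • dd u.swap := by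
  rw [Tminus, Ring.smul_lie (1/4 : ℝ) _ (mulX u), Ring.sum_lie]
  simp only [Ring.mul_lie, lie_dd_mulX]
  cases u <;> simp

theorem lie_mulX_Tplus (u : Fin 4 ⊕ Fin 4) : ⁅mulX u, Tplus⁆ = 0 :=
  (Commute.sum_right _ _ _ fun _ _ => (mulX_commute _ _).mul_right (mulX_commute _ _)).lie_eq

theorem lie_Tminus_dd (v : Fin 4 ⊕ Fin 4) : ⁅Tminus, dd v⁆ = 0 :=
  ((Commute.sum_left _ _ _ fun _ _ => (dd_commute _ _).mul_left (dd_commute _ _)).smul_left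
    _).lie_eq

theorem lie_mulX_mul_dd_Tplus (u v : Fin 4 ⊕ Fin 4) :
    ⁅mulX u * dd v, Tplus⁆ = mulX u * mulX v.swap := by
  rw [Ring.mul_lie, lie_dd_Tplus, lie_mulX_Tplus, zero_mul, add_zero]

theorem lie_Tminus_mulX_mul_dd (u v : Fin 4 ⊕ Fin 4) :
    ⁅Tminus, mulX u * dd v⁆ = (1/4 : ℝ) • (dd u.swap * dd v) := by
  rw [Ring.lie_mul, lie_Tminus_mulX, lie_Tminus_dd, mul_zero, add_zero, smul_mul_assoc]

/-- `Splus V = skewOp V Sum.inr` and `Sminus V = skewOp V Sum.inl` hold definitionally. -/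
def skewOp (V : Matrix (Fin 4) (Fin 4) ℝ) (e : Fin 4 → Fin 4 ⊕ Fin 4) : Module.End ℝ P8 :=
  ∑ α : Fin 4, ∑ β : Fin 4, V α β • (mulX (e α) * dd (e β).swap)

theorem lie_skewOp_Tplus {V : Matrix (Fin 4) (Fin 4) ℝ} (hV : ∀ α β, V α β = -V β α)
    (e : Fin 4 → Fin 4 ⊕ Fin 4) : ⁅skewOp V e, Tplus⁆ = 0 := by
  -- `simp` cannot find the scalar-action instances of `Ring.smul_lie` on its own here.
  simp only [skewOp, Ring.sum_lie, Ring.smul_lie (R := ℝ) (A := Module.End ℝ P8),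
    lie_mulX_mul_dd_Tplus, Sum.swap_swap]
  exact sum_sum_smul_eq_zero_of_antisymm V hV _ fun α β => (mulX_commute _ _).eq

theorem lie_skewOp_Tminus {V : Matrix (Fin 4) (Fin 4) ℝ} (hV : ∀ α β, V α β = -V β α)
    (e : Fin 4 → Fin 4 ⊕ Fin 4) : ⁅skewOp V e, Tminus⁆ = 0 := by
  refine (commute_iff_lie_eq.mpr ?_).symm.lie_eq
  simp only [skewOp, Ring.lie_sum, Ring.lie_smul (R := ℝ) (A := Module.End ℝ P8),
    lie_Tminus_mulX_mul_dd]
  exact sum_sum_smul_eq_zero_of_antisymm V hV _ fun α β => by rw [(dd_commute _ _).eq]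

theorem S_T_commute_general (Vup Vdn : Matrix (Fin 4) (Fin 4) ℝ)
    (hup : ∀ α β, Vup α β = -Vup β α) (hdn : ∀ α β, Vdn α β = -Vdn β α) :
    ⁅Splus Vdn, Tplus⁆ = 0 ∧ ⁅Splus Vdn, Tminus⁆ = 0 ∧
    ⁅Sminus Vup, Tplus⁆ = 0 ∧ ⁅Sminus Vup, Tminus⁆ = 0 :=
  ⟨lie_skewOp_Tplus hdn Sum.inr, lie_skewOp_Tminus hdn Sum.inr,
    lie_skewOp_Tplus hup Sum.inl, lie_skewOp_Tminus hup Sum.inl⟩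

/-- For antisymmetric `V^{αβ}`, `V_{αβ}` with `V_{αγ}V^{βγ} = δ_α^β`, the operators
`S⁺`, `S⁻` commute with `T⁺`, `T⁻`, so the two sl(2) algebras mutually commute. -/
theorem S_T_commute (Vup Vdn : Matrix (Fin 4) (Fin 4) ℝ)
    (hup : ∀ α β, Vup α β = -Vup β α) (hdn : ∀ α β, Vdn α β = -Vdn β α)
    (hinv : ∀ α β, ∑ γ : Fin 4, Vdn α γ * Vup β γ = if α = β then 1 else 0) :
    ⁅Splus Vdn, Tplus⁆ = 0 ∧ ⁅Splus Vdn, Tminus⁆ = 0 ∧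
    ⁅Sminus Vup, Tplus⁆ = 0 ∧ ⁅Sminus Vup, Tminus⁆ = 0 :=
  S_T_commute_general Vup Vdn hup hdn
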